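/- Let Φ: M_{d_A} → M_{d_B} be a degradable CPT map with complement Φ^C: M_{d_A} → M_{d_E} (minimal environment). For a pure state |ψ⟩ let B_ψ = range Φ(|ψ⟩⟨ψ|) and E_ψ = range Φ^C(|ψ⟩⟨ψ|). Then dim B_ψ = dim E_ψ; moreover, if pure states |ψ_1⟩,...,|ψ_m⟩ satisfy span(∪_j B_{ψ_j}) = C^{d_B}, then span(∪_j E_{ψ_j}) = C^{d_E}. -/

import Mathlib

/-! For a pure input `ψ`, the outputs of `Φ` and `Φᶜ` are the two reduced states of the bipartite
vector `Uψ`, hence have equal rank. For the spanning statement put `σ = ∑ⱼ ψⱼψⱼ*`: for positive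
semidefinite summands, the ranges span the whole space iff the sum is positive definite, so
`Φ(σ)` is positive definite and therefore `Φ(1) ≤ γ Φ(σ)` for some `γ > 0`. Applying the positive
map `Ψ` gives `Φᶜ(1) ≤ γ Φᶜ(σ)`; as `Φᶜ(1)` is the Gram matrix of the linearly independent Kraus
operators, it is positive definite, and so is `Φᶜ(σ)`. -/

open Matrix Kronecker BigOperators ComplexOrder

noncomputable def krausMap {n m ι : Type*} [Fintype n] [Fintype ι]
    (A : ι → Matrix m n ℂ) : Matrix n n ℂ →ₗ[ℂ] Matrix m m ℂ where
  toFun ρ := ∑ k, A k * ρ * (A k)ᴴ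
  map_add' ρ σ := by
    simp [Matrix.mul_add, Matrix.add_mul, Finset.sum_add_distrib]
  map_smul' c ρ := by
    simp [Matrix.mul_smul, Matrix.smul_mul, Finset.smul_sum]

noncomputable def complementMap {n m ι : Type*} [Fintype n] [Fintype m] [Fintype ι]
    (A : ι → Matrix m n ℂ) : Matrix n n ℂ →ₗ[ℂ] Matrix ι ι ℂ where
  toFun ρ := Matrix.of fun j k => (A j * ρ * (A k)ᴴ).trace
  map_add' ρ σ := by
    ext j k
    simp [Matrix.mul_add, Matrix.add_mul]
  map_smul' c ρ := by
    ext j k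
    simp [Matrix.mul_smul, Matrix.smul_mul]

noncomputable def choi {n m : Type*} [Fintype n] [DecidableEq n]
    (Φ : Matrix n n ℂ →ₗ[ℂ] Matrix m m ℂ) : Matrix (n × m) (n × m) ℂ :=
  Matrix.of fun p q => Φ (Matrix.single p.1 q.1 1) p.2 q.2

def IsCPTP {n m : Type*} [Fintype n] [DecidableEq n] [Fintype m]
    (Φ : Matrix n n ℂ →ₗ[ℂ] Matrix m m ℂ) : Prop :=
  (choi Φ).PosSemidef ∧ ∀ ρ, (Φ ρ).trace = ρ.trace

def IsKrausRep {n m ι : Type*} [Fintype n] [DecidableEq n] [Fintype m] [Fintype ι]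
    (A : ι → Matrix m n ℂ) (Φ : Matrix n n ℂ →ₗ[ℂ] Matrix m m ℂ) : Prop :=
  (∀ ρ, Φ ρ = ∑ k, A k * ρ * (A k)ᴴ) ∧ ∑ k, (A k)ᴴ * A k = 1

def Degradable {n m : Type*} [Fintype n] [DecidableEq n] [Fintype m] [DecidableEq m]
    (Φ : Matrix n n ℂ →ₗ[ℂ] Matrix m m ℂ) : Prop :=
  ∃ (e : ℕ) (A : Fin e → Matrix m n ℂ), IsKrausRep A Φ ∧
    ∃ Ψ : Matrix m m ℂ →ₗ[ℂ] Matrix (Fin e) (Fin e) ℂ,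
      IsCPTP Ψ ∧ Ψ ∘ₗ Φ = complementMap A

def AntiDegradable {n m : Type*} [Fintype n] [DecidableEq n] [Fintype m] [DecidableEq m]
    (Φ : Matrix n n ℂ →ₗ[ℂ] Matrix m m ℂ) : Prop :=
  ∃ (e : ℕ) (A : Fin e → Matrix m n ℂ), IsKrausRep A Φ ∧
    ∃ Λ : Matrix (Fin e) (Fin e) ℂ →ₗ[ℂ] Matrix m m ℂ,
      IsCPTP Λ ∧ Λ ∘ₗ complementMap A = Φ

lemma IsStrictlyPositive.exists_le_smul {A : Type*} [TopologicalSpace A] [Ring A] [StarRing A]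
    [PartialOrder A] [StarOrderedRing A] [Algebra ℝ A] [PosSMulMono ℝ A]
    [NonnegSpectrumClass ℝ A] [ContinuousFunctionalCalculus ℝ A IsSelfAdjoint] {a b : A}
    (ha : IsStrictlyPositive a) (hb : IsSelfAdjoint b) : ∃ γ : ℝ, 0 < γ ∧ b ≤ γ • a := by
  cases subsingleton_or_nontrivial A
  · exact ⟨1, one_pos, (Subsingleton.elim _ _).le⟩
  obtain ⟨r, hr, hra⟩ := (CFC.exists_pos_algebraMap_le_iff ha.isSelfAdjoint).2
    fun x hx ↦ ha.spectrum_pos hx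
  obtain ⟨s, hs⟩ := (ContinuousFunctionalCalculus.isCompact_spectrum (R := ℝ) b).bddAbove
  refine ⟨max s 1 / r, by positivity, ?_⟩
  calc b ≤ algebraMap ℝ A (max s 1) :=
        (le_algebraMap_iff_spectrum_le hb).2 fun x hx ↦ (hs hx).trans (le_max_left _ _)
    _ = (max s 1 / r) • algebraMap ℝ A r := by
        rw [Algebra.smul_def, ← map_mul, div_mul_cancel₀ _ hr.ne']
    _ ≤ (max s 1 / r) • a := smul_le_smul_of_nonneg_left hra (by positivity)

open scoped MatrixOrder in
lemma Matrix.PosDef.exists_posSemidef_smul_sub {n : Type*} [Fintype n] [DecidableEq n]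
    {Q P : Matrix n n ℂ} (hQ : Q.PosDef) (hP : P.IsHermitian) :
    ∃ γ : ℝ, 0 < γ ∧ (γ • Q - P).PosSemidef :=
  hQ.isStrictlyPositive.exists_le_smul hP

section Span

variable {ι n 𝕜 : Type*} [Fintype ι] [Fintype n] [RCLike 𝕜]

lemma sum_mulVec_eq_zero_iff_of_posSemidef {P : ι → Matrix n n 𝕜} (hP : ∀ j, (P j).PosSemidef)
    (x : n → 𝕜) : (∑ j, P j) *ᵥ x = 0 ↔ ∀ j, P j *ᵥ x = 0 := by
  simp_rw [← (posSemidef_sum _ fun j _ => hP j).dotProduct_mulVec_zero_iff,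
    ← fun j => (hP j).dotProduct_mulVec_zero_iff x, sum_mulVec, dotProduct_sum]
  simpa using Finset.sum_eq_zero_iff_of_nonneg (s := .univ) fun j _ =>
    (hP j).dotProduct_mulVec_nonneg x

lemma iSup_range_mulVecLin_eq_top_iff_posDef_sum [DecidableEq n] {P : ι → Matrix n n 𝕜}
    (hP : ∀ j, (P j).PosSemidef) :
    (⨆ j, LinearMap.range (P j).mulVecLin) = ⊤ ↔ (∑ j, P j).PosDef := by
  rw [(posSemidef_sum _ fun j _ => hP j).posDef_iff_isUnit]
  constructor
  · intro hspan
    refine mulVec_injective_iff_isUnit.mp <|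
      (injective_iff_map_eq_zero (∑ j, P j).mulVecLin).2 fun x hx => ?_
    have hPx := (sum_mulVec_eq_zero_iff_of_posSemidef hP x).1 hx
    have hperp : ∀ y ∈ ⨆ j, LinearMap.range (P j).mulVecLin, star x ⬝ᵥ y = 0 := by
      intro y hy
      induction hy using Submodule.iSup_induction' with
      | mem j y hy =>
        obtain ⟨z, rfl⟩ := hy
        rw [mulVecLin_apply, dotProduct_mulVec, ← (hP j).isHermitian.eq, ← star_mulVec, hPx j,
          star_zero, zero_dotProduct]
      | zero => exact dotProduct_zero _
      | add y z _ _ hy hz => rw [dotProduct_add, hy, hz, add_zero]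
    exact dotProduct_star_self_eq_zero.mp (hperp x (hspan ▸ Submodule.mem_top))
  · intro hunit
    rw [eq_top_iff, ← (LinearMap.range_eq_top (f := (∑ j, P j).mulVecLin)).2
      (mulVec_surjective_iff_isUnit.2 hunit)]
    rintro _ ⟨x, rfl⟩
    rw [mulVecLin_apply, sum_mulVec]
    exact Submodule.sum_mem _ fun j _ => Submodule.mem_iSup_of_mem j ⟨x, rfl⟩

end Span

section Choi

variable {n m : Type*} [Fintype n] [DecidableEq n]

lemma map_apply_eq_sum_choi (Ψ : Matrix n n ℂ →ₗ[ℂ] Matrix m m ℂ) (ρ : Matrix n n ℂ) (j k : m) :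
    Ψ ρ j k = ∑ p, ∑ q, ρ p q * choi Ψ (p, j) (q, k) := by
  conv_lhs => rw [matrix_eq_sum_single ρ]
  simp only [map_sum, Matrix.sum_apply]
  refine Finset.sum_congr rfl fun p _ => Finset.sum_congr rfl fun q _ => ?_
  rw [show single p q (ρ p q) = ρ p q • single p q 1 by simp [smul_single], map_smul]
  rfl

lemma posSemidef_map_vecMulVec_of_posSemidef_choi [Fintype m] [DecidableEq m]
    {Ψ : Matrix n n ℂ →ₗ[ℂ] Matrix m m ℂ} (hΨ : (choi Ψ).PosSemidef) (w : n → ℂ) :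
    (Ψ (vecMulVec w (star w))).PosSemidef := by
  let V : Matrix (n × m) m ℂ := of fun qk k => if qk.2 = k then star (w qk.1) else 0
  suffices Ψ (vecMulVec w (star w)) = Vᴴ * choi Ψ * V from this ▸ hΨ.conjTranspose_mul_mul_same V
  ext j k
  simp only [map_apply_eq_sum_choi, vecMulVec_apply, Pi.star_apply, RCLike.star_def, mul_apply,
    conjTranspose_apply, of_apply, apply_ite (starRingEnd ℂ), RingHomCompTriple.comp_apply,
    RingHom.id_apply, map_zero, ite_mul, zero_mul, Fintype.sum_prod_type, Finset.sum_ite_eq',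
    Finset.mem_univ, ↓reduceIte, mul_ite, Finset.sum_mul, mul_zero, V]
  rw [Finset.sum_comm]
  exact Finset.sum_congr rfl fun p _ => Finset.sum_congr rfl fun q _ => by ring

lemma posSemidef_map_of_posSemidef_choi [Fintype m] [DecidableEq m]
    {Ψ : Matrix n n ℂ →ₗ[ℂ] Matrix m m ℂ} (hΨ : (choi Ψ).PosSemidef) {ρ : Matrix n n ℂ}
    (hρ : ρ.PosSemidef) : (Ψ ρ).PosSemidef := by
  obtain ⟨r, v, rfl⟩ := posSemidef_iff_eq_sum_vecMulVec.mp hρ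
  rw [map_sum]
  exact posSemidef_sum _ fun i _ => posSemidef_map_vecMulVec_of_posSemidef_choi hΨ (v i)

end Choi

section Kraus

variable {n m ι : Type*} [Fintype n] [Fintype ι] (A : ι → Matrix m n ℂ)

/-- The Stinespring vector `∑ₖ Aₖψ ⊗ eₖ ∈ ℂ^m ⊗ ℂ^ι`, as an `m × ι` matrix. -/
noncomputable def stinespringVector (ψ : n → ℂ) : Matrix m ι ℂ := of fun i k => (A k *ᵥ ψ) i

lemma krausMap_apply (ρ : Matrix n n ℂ) : krausMap A ρ = ∑ k, A k * ρ * (A k)ᴴ := rfl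

lemma complementMap_apply [Fintype m] (ρ : Matrix n n ℂ) (j k : ι) :
    complementMap A ρ j k = (A j * ρ * (A k)ᴴ).trace := rfl

lemma krausMap_vecMulVec (ψ : n → ℂ) :
    krausMap A (vecMulVec ψ (star ψ)) = stinespringVector A ψ * (stinespringVector A ψ)ᴴ := by
  ext i j
  simp [krausMap_apply, stinespringVector, mul_vecMulVec, vecMulVec_mul, ← star_mulVec,
    Matrix.sum_apply, mul_apply, vecMulVec_apply]

lemma complementMap_vecMulVec [Fintype m] (ψ : n → ℂ) :
    complementMap A (vecMulVec ψ (star ψ))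
      = ((stinespringVector A ψ)ᴴ * stinespringVector A ψ)ᵀ := by
  ext j k
  simp [complementMap_apply, stinespringVector, mul_vecMulVec, vecMulVec_mul, ← star_mulVec,
    trace, mul_apply, vecMulVec_apply, mul_comm]

lemma posSemidef_krausMap [Fintype m] {ρ : Matrix n n ℂ} (hρ : ρ.PosSemidef) :
    (krausMap A ρ).PosSemidef :=
  posSemidef_sum _ fun k _ => hρ.mul_mul_conjTranspose_same (A k)

lemma posSemidef_complementMap_vecMulVec [Fintype m] (ψ : n → ℂ) :
    (complementMap A (vecMulVec ψ (star ψ))).PosSemidef := by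
  rw [complementMap_vecMulVec]
  exact (posSemidef_conjTranspose_mul_self _).transpose

lemma rank_krausMap_vecMulVec_eq_rank_complementMap [Fintype m] (ψ : n → ℂ) :
    (krausMap A (vecMulVec ψ (star ψ))).rank = (complementMap A (vecMulVec ψ (star ψ))).rank := by
  rw [krausMap_vecMulVec, complementMap_vecMulVec, rank_transpose, rank_self_mul_conjTranspose,
    rank_conjTranspose_mul_self]

lemma posDef_complementMap_one [DecidableEq n] [Fintype m] (hA : LinearIndependent ℂ A) :
    (complementMap A 1).PosDef := by
  let V : Matrix (m × n) ι ℂ := of fun x k => A k x.1 x.2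
  have hV : Function.Injective V.mulVec := by
    refine (injective_iff_map_eq_zero V.mulVecLin).2 fun c hc => ?_
    have hcomb : ∑ k, c k • A k = 0 := by
      ext i p
      simpa [V, mulVec, dotProduct, mul_comm, Matrix.sum_apply] using congrFun hc (i, p)
    exact funext (Fintype.linearIndependent_iff.1 hA c hcomb)
  have hgram : complementMap A 1 = (Vᴴ * V)ᵀ := by
    ext j k
    simp [complementMap_apply, V, trace, mul_apply, Fintype.sum_prod_type, mul_comm]
  rw [hgram]
  exact (PosDef.conjTranspose_mul_self V hV).transpose

end Kraus

theorem degradable_range_lemma_general {a b e : ℕ}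
    (A : Fin e → Matrix (Fin b) (Fin a) ℂ)
    (hmin : LinearIndependent ℂ A)
    (hdeg : ∃ Ψ : Matrix (Fin b) (Fin b) ℂ →ₗ[ℂ] Matrix (Fin e) (Fin e) ℂ,
      IsCPTP Ψ ∧ Ψ ∘ₗ krausMap A = complementMap A) :
    (∀ ψ : Fin a → ℂ, star ψ ⬝ᵥ ψ = 1 →
      (krausMap A (Matrix.vecMulVec ψ (star ψ))).rank
        = (complementMap A (Matrix.vecMulVec ψ (star ψ))).rank) ∧
    (∀ (m : ℕ) (ψ : Fin m → Fin a → ℂ), (∀ j, star (ψ j) ⬝ᵥ ψ j = 1) →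
      (⨆ j, LinearMap.range
        (krausMap A (Matrix.vecMulVec (ψ j) (star (ψ j)))).mulVecLin) = ⊤ →
      (⨆ j, LinearMap.range
        (complementMap A (Matrix.vecMulVec (ψ j) (star (ψ j)))).mulVecLin) = ⊤) := by
  obtain ⟨Ψ, ⟨hΨ, -⟩, hΨΦ⟩ := hdeg
  refine ⟨fun ψ _ => rank_krausMap_vecMulVec_eq_rank_complementMap A ψ, fun m ψ _ hspan => ?_⟩
  set σ := ∑ j, vecMulVec (ψ j) (star (ψ j))
  have hB : (krausMap A σ).PosDef := by
    rw [map_sum]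
    exact (iSup_range_mulVecLin_eq_top_iff_posDef_sum fun j =>
      posSemidef_krausMap A (posSemidef_vecMulVec_self_star _)).1 hspan
  obtain ⟨γ, hγ, hle⟩ :=
    hB.exists_posSemidef_smul_sub (posSemidef_krausMap A PosSemidef.one).isHermitian
  have hE : (γ • complementMap A σ - complementMap A 1).PosSemidef := by
    have := posSemidef_map_of_posSemidef_choi hΨ hle
    rwa [map_sub, LinearMap.map_smul_of_tower, ← LinearMap.comp_apply, ← LinearMap.comp_apply,
      hΨΦ] at this
  have hEσ : (complementMap A σ).PosDef := by
    simpa [hγ.ne'] using ((posDef_complementMap_one A hmin).add_posSemidef hE).smul (inv_pos.2 hγ)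
  rw [map_sum] at hEσ
  exact (iSup_range_mulVecLin_eq_top_iff_posDef_sum fun j =>
    posSemidef_complementMap_vecMulVec A (ψ j)).2 hEσ

/-- for a degradable channel (with a minimal Kraus representation `A`),
for each pure input the ranks of the channel output and the complementary output agree,
and if finitely many pure inputs have outputs whose ranges span the output space,
then the corresponding complementary outputs have ranges spanning the environment. -/
theorem degradable_range_lemma {a b e : ℕ}
    (A : Fin e → Matrix (Fin b) (Fin a) ℂ)
    (hTP : ∑ k, (A k)ᴴ * A k = 1)
    (hmin : LinearIndependent ℂ A)
    (hdeg : ∃ Ψ : Matrix (Fin b) (Fin b) ℂ →ₗ[ℂ] Matrix (Fin e) (Fin e) ℂ,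
      IsCPTP Ψ ∧ Ψ ∘ₗ krausMap A = complementMap A) :
    (∀ ψ : Fin a → ℂ, star ψ ⬝ᵥ ψ = 1 →
      (krausMap A (Matrix.vecMulVec ψ (star ψ))).rank
        = (complementMap A (Matrix.vecMulVec ψ (star ψ))).rank) ∧
    (∀ (m : ℕ) (ψ : Fin m → Fin a → ℂ), (∀ j, star (ψ j) ⬝ᵥ ψ j = 1) →
      (⨆ j, LinearMap.range
        (krausMap A (Matrix.vecMulVec (ψ j) (star (ψ j)))).mulVecLin) = ⊤ →
      (⨆ j, LinearMap.range
        (complementMap A (Matrix.vecMulVec (ψ j) (star (ψ j)))).mulVecLin) = ⊤) :=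
  degradable_range_lemma_general A hmin hdeg
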